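/- Let m ≥ 0 be an integer, R > 0, and θ1 ∈ (0, π/2). For densities σ_1(φ) = σ_1^{(m)} e^{imφ} and σ_2(φ) = σ_2^{(m)} e^{imφ} on the two rings at colatitudes θ1 and π − θ1 on the sphere of radius R, let P_n^m (for n ≥ m) denote the resulting ring multipole coefficients, P_n^m = sqrt((2n+1)/(4π)) sqrt((n−m)!/(n+m)!) R^{n+1} sin θ1 ∫_0^{2π} [σ_1(φ) P_n^m(cos θ1) + σ_2(φ) P_n^m(−cos θ1)] e^{−imφ} dφ. Then for any prescribed complex numbers M_m^m and M_{m+1}^m there exist unique σ_1^{(m)}, σ_2^{(m)} ∈ ℂ such that P_m^m = M_m^m and P_{m+1}^m = M_{m+1}^m; they are obtained by solving the 2×2 linear system with matrix ((1,1),(1,−1)) acting on (σ_1^{(m)}, σ_2^{(m)}), using that P_n^m(−x) = (−1)^{n+m} P_n^m(x) so that the σ_1 + σ_2 combination controls P_m^m and the σ_1 − σ_2 combination controls P_{m+1}^m, and using that P_m^m(cos θ1) ≠ 0 and P_{m+1}^m(cos θ1) ≠ 0 for θ1 ∈ (0, π/2). Consequently the multipole expansion of the difference between a given field with coefficients M_n^m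 and the ring potential has vanishing coefficients for all (n,m) with n − |m| ≤ 1. -/
import Mathlib


open MeasureTheory

/-- The Legendre polynomial of degree `n` (Rodrigues' formula). -/
noncomputable def legendreP (n : ℕ) (x : ℝ) : ℝ :=
  (1 / (2 ^ n * n.factorial)) * iteratedDeriv n (fun y => (y ^ 2 - 1) ^ n) x

/-- The associated Legendre function
`P_n^m(x) = (−1)^m (1−x²)^{m/2} (d^m/dx^m) P_n(x)`. -/
noncomputable def assocLegendreP (n m : ℕ) (x : ℝ) : ℝ :=
  (-1) ^ m * (1 - x ^ 2) ^ ((m : ℝ) / 2) * iteratedDeriv m (legendreP n) x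

/-- The ring multipole coefficient of degree `n` and order `m` produced by the
densities `σ1(φ) = s1·e^{imφ}` and `σ2(φ) = s2·e^{imφ}` on the two rings at
colatitudes `θ1` and `π − θ1` on the sphere of radius `R`:
`P_n^m = sqrt((2n+1)/(4π)) sqrt((n−m)!/(n+m)!) R^{n+1} sin θ1
  ∫_0^{2π} [σ1(φ) P_n^m(cos θ1) + σ2(φ) P_n^m(−cos θ1)] e^{−imφ} dφ`. -/
noncomputable def ringCoef (R θ1 : ℝ) (m : ℕ) (s1 s2 : ℂ) (n : ℕ) : ℂ :=
  Complex.ofReal (Real.sqrt ((2 * n + 1) / (4 * Real.pi))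
      * Real.sqrt ((n - m).factorial / (n + m).factorial)
      * R ^ (n + 1) * Real.sin θ1)
    * ∫ φ in (0:ℝ)..(2 * Real.pi),
        (s1 * Complex.exp (Complex.I * (m : ℂ) * Complex.ofReal φ)
            * Complex.ofReal (assocLegendreP n m (Real.cos θ1))
          + s2 * Complex.exp (Complex.I * (m : ℂ) * Complex.ofReal φ)
            * Complex.ofReal (assocLegendreP n m (-Real.cos θ1)))
        * Complex.exp (-Complex.I * (m : ℂ) * Complex.ofReal φ)

open Polynomial in
private lemma iteratedDeriv_polyEval (p : ℝ[X]) (k : ℕ) :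
    iteratedDeriv k (fun x => p.eval x) = fun x => (Polynomial.derivative^[k] p).eval x := by
  induction k with
  | zero => simp
  | succ k ih =>
    rw [iteratedDeriv_succ, ih]
    funext x
    rw [Function.iterate_succ_apply']
    exact Polynomial.deriv (Polynomial.derivative^[k] p)

open Polynomial in
private lemma termC (e j n : ℕ) :
    ((-1:ℝ[X]) ^ e * (X^2) ^ j * ((n.choose j) : ℝ[X]))
      = C ((-1) ^ e * (n.choose j : ℝ)) * X ^ (2*j) := by
  simp [map_mul, map_pow, ← pow_mul]
  ring

private lemma descFacAux (k : ℕ) : (k+1).descFactorial k = (k+1).factorial := by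
  induction k with
  | zero => rfl
  | succ k ih => rw [Nat.succ_descFactorial_succ, ih]; exact (Nat.factorial_succ (k+1)).symm

open Polynomial in
private lemma key1 (n : ℕ) :
    Polynomial.derivative^[2*n] (((X : ℝ[X])^2 - 1)^n) = C ((2*n).factorial : ℝ) := by
  rw [sub_pow, Polynomial.iterate_derivative_sum]
  rw [Finset.sum_eq_single n]
  · rw [one_pow, mul_one, termC (n+n) n n, Polynomial.iterate_derivative_C_mul,
      Polynomial.iterate_derivative_X_pow_eq_smul]
    have hd : (2*n).descFactorial (2*n) = (2*n).factorial := Nat.descFactorial_self _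
    have he : ((-1:ℝ)) ^ (n+n) = 1 := Even.neg_one_pow ⟨n, rfl⟩
    simp [hd, he, Polynomial.smul_eq_C_mul]
  · intro j hj hne
    have h2j : 2*j < 2*n := by
      have := Finset.mem_range.mp hj; omega
    rw [one_pow, mul_one, termC (j+n) j n, Polynomial.iterate_derivative_C_mul,
      Polynomial.iterate_derivative_eq_zero (by simpa using h2j), mul_zero]
  · intro h; exact absurd (Finset.self_mem_range_succ n) h

open Polynomial in
private lemma key2 (n : ℕ) :
    Polynomial.derivative^[2*n+1] (((X : ℝ[X])^2 - 1)^(n+1)) = C ((2*n+2).factorial : ℝ) * X := by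
  rw [sub_pow, Polynomial.iterate_derivative_sum]
  rw [Finset.sum_eq_single (n+1)]
  · rw [one_pow, mul_one, termC (n+1+(n+1)) (n+1) (n+1), Polynomial.iterate_derivative_C_mul,
      Polynomial.iterate_derivative_X_pow_eq_smul]
    have hd : (2*(n+1)).descFactorial (2*n+1) = (2*n+2).factorial := by
      have h1 : 2*(n+1) = (2*n+1)+1 := by omega
      rw [h1, descFacAux]
    have he : ((-1:ℝ)) ^ (n+1+(n+1)) = 1 := Even.neg_one_pow ⟨n+1, rfl⟩
    have hx : 2*(n+1) - (2*n+1) = 1 := by omega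
    rw [hx, hd, pow_one, he, Nat.choose_self, Polynomial.smul_eq_C_mul]
    push_cast
    ring_nf
    simp [mul_comm]
  · intro j hj hne
    have h2j : 2*j < 2*n+1 := by
      have := Finset.mem_range.mp hj; omega
    rw [one_pow, mul_one, termC (j+(n+1)) j (n+1), Polynomial.iterate_derivative_C_mul,
      Polynomial.iterate_derivative_eq_zero (by simpa using h2j), mul_zero]
  · intro h; exact absurd (Finset.self_mem_range_succ (n+1)) h

open Polynomial in
private lemma legendre_poly (n : ℕ) :
    legendreP n = fun x => Polynomial.eval x
      (C ((1:ℝ)/(2^n * n.factorial)) * Polynomial.derivative^[n] (((X:ℝ[X])^2-1)^n)) := by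
  funext x
  unfold legendreP
  rw [show (fun y : ℝ => (y^2-1)^n) = fun y => Polynomial.eval y (((X:ℝ[X])^2-1)^n) from
    funext (fun y => by simp), iteratedDeriv_polyEval]
  simp

open Polynomial in
private lemma iterated_legendre (n m : ℕ) :
    iteratedDeriv m (legendreP n) = fun x => Polynomial.eval x
      (C ((1:ℝ)/(2^n * n.factorial)) * Polynomial.derivative^[m+n] (((X:ℝ[X])^2-1)^n)) := by
  rw [legendre_poly, iteratedDeriv_polyEval]
  funext x
  rw [Polynomial.iterate_derivative_C_mul, Function.iterate_add_apply]

open Polynomial in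
private lemma aL_mm (m : ℕ) (x : ℝ) :
    assocLegendreP m m x
      = (-1) ^ m * (1 - x ^ 2) ^ ((m : ℝ) / 2) * ((2*m).factorial / (2^m * m.factorial)) := by
  unfold assocLegendreP
  rw [iterated_legendre, show m + m = 2*m by ring, key1]
  simp only [eval_mul, eval_C]
  ring

open Polynomial in
private lemma aL_m1m (m : ℕ) (x : ℝ) :
    assocLegendreP (m+1) m x
      = (-1) ^ m * (1 - x ^ 2) ^ ((m : ℝ) / 2)
          * ((2*m+2).factorial / (2^(m+1) * (m+1).factorial)) * x := by
  unfold assocLegendreP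
  rw [iterated_legendre, show m + (m+1) = 2*m+1 by ring, key2]
  simp only [eval_mul, eval_C, eval_X]
  ring

private lemma ringCoef_eq (R θ1 : ℝ) (m : ℕ) (s1 s2 : ℂ) (n : ℕ) :
    ringCoef R θ1 m s1 s2 n =
      Complex.ofReal (Real.sqrt ((2 * n + 1) / (4 * Real.pi))
          * Real.sqrt ((n - m).factorial / (n + m).factorial)
          * R ^ (n + 1) * Real.sin θ1)
        * ((2 * Real.pi : ℝ) *
           (s1 * Complex.ofReal (assocLegendreP n m (Real.cos θ1))
            + s2 * Complex.ofReal (assocLegendreP n m (-Real.cos θ1)))) := by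
  unfold ringCoef
  congr 1
  have hfun : (fun φ : ℝ =>
      (s1 * Complex.exp (Complex.I * (m : ℂ) * Complex.ofReal φ)
          * Complex.ofReal (assocLegendreP n m (Real.cos θ1))
        + s2 * Complex.exp (Complex.I * (m : ℂ) * Complex.ofReal φ)
          * Complex.ofReal (assocLegendreP n m (-Real.cos θ1)))
      * Complex.exp (-Complex.I * (m : ℂ) * Complex.ofReal φ))
      = fun _ : ℝ => (s1 * Complex.ofReal (assocLegendreP n m (Real.cos θ1))
          + s2 * Complex.ofReal (assocLegendreP n m (-Real.cos θ1))) := by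
    funext φ
    have h1 : Complex.exp (Complex.I * (m : ℂ) * Complex.ofReal φ)
        * Complex.exp (-Complex.I * (m : ℂ) * Complex.ofReal φ) = 1 := by
      rw [← Complex.exp_add,
        show Complex.I * (m : ℂ) * Complex.ofReal φ
            + -Complex.I * (m : ℂ) * Complex.ofReal φ = 0 by ring, Complex.exp_zero]
    linear_combination (s1 * Complex.ofReal (assocLegendreP n m (Real.cos θ1))
      + s2 * Complex.ofReal (assocLegendreP n m (-Real.cos θ1))) * h1
  rw [hfun, intervalIntegral.integral_const, sub_zero, Complex.real_smul]

set_option maxHeartbeats 800000 in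
/-- For any prescribed multipole coefficients `M_m^m` and `M_{m+1}^m`, there exist
unique ring densities `σ1^{(m)}, σ2^{(m)}` matching them: the ring coefficients of
degrees `m` and `m+1` can be prescribed arbitrarily, uniquely. -/
theorem ring_densities_exist_unique
    (m : ℕ) (R θ1 : ℝ) (hR : 0 < R) (hθ1 : θ1 ∈ Set.Ioo 0 (Real.pi / 2))
    (Mmm Mm1m : ℂ) :
    ∃! p : ℂ × ℂ,
      ringCoef R θ1 m p.1 p.2 m = Mmm ∧ ringCoef R θ1 m p.1 p.2 (m + 1) = Mm1m := by
  obtain ⟨hθa, hθb⟩ := hθ1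
  have hπ := Real.pi_pos
  obtain ⟨c, hc⟩ : ∃ c : ℝ, c = Real.cos θ1 := ⟨_, rfl⟩
  have hc0 : 0 < c := hc ▸ Real.cos_pos_of_mem_Ioo ⟨by linarith, hθb⟩
  have hc1 : c < 1 := by
    rw [hc]
    simpa using Real.cos_lt_cos_of_nonneg_of_le_pi (le_refl 0) (by linarith) hθa
  have h1c : 0 < 1 - c ^ 2 := by nlinarith
  obtain ⟨A, hA⟩ : ∃ a : ℝ, a = assocLegendreP m m c := ⟨_, rfl⟩
  obtain ⟨B, hB⟩ : ∃ b : ℝ, b = assocLegendreP (m+1) m c := ⟨_, rfl⟩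
  have hAneg : assocLegendreP m m (-c) = A := by
    simp only [hA, aL_mm]; ring_nf
  have hBneg : assocLegendreP (m+1) m (-c) = -B := by
    simp only [hB, aL_m1m]; ring_nf
  have hA0 : A ≠ 0 := by
    rw [hA, aL_mm]
    have h1 : (1 - c ^ 2) ^ ((m : ℝ) / 2) > 0 := Real.rpow_pos_of_pos h1c _
    have h2 : (0:ℝ) < (2*m).factorial / (2^m * m.factorial) := by positivity
    have h3 : ((-1:ℝ)) ^ m ≠ 0 := pow_ne_zero _ (by norm_num)
    exact mul_ne_zero (mul_ne_zero h3 (ne_of_gt h1)) (ne_of_gt h2)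
  have hB0 : B ≠ 0 := by
    rw [hB, aL_m1m]
    have h1 : (1 - c ^ 2) ^ ((m : ℝ) / 2) > 0 := Real.rpow_pos_of_pos h1c _
    have h2 : (0:ℝ) < (2*m+2).factorial / (2^(m+1) * (m+1).factorial) := by positivity
    have h3 : ((-1:ℝ)) ^ m ≠ 0 := pow_ne_zero _ (by norm_num)
    exact mul_ne_zero (mul_ne_zero (mul_ne_zero h3 (ne_of_gt h1)) (ne_of_gt h2)) (ne_of_gt hc0)
  have hsin : 0 < Real.sin θ1 := Real.sin_pos_of_pos_of_lt_pi hθa (by linarith)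
  have hKpos : ∀ n : ℕ, 0 < Real.sqrt ((2 * n + 1) / (4 * Real.pi))
      * Real.sqrt ((n - m).factorial / (n + m).factorial)
      * R ^ (n + 1) * Real.sin θ1 := by
    intro n
    have h1 : 0 < Real.sqrt ((2 * n + 1) / (4 * Real.pi)) :=
      Real.sqrt_pos.mpr (by positivity)
    have h2 : 0 < Real.sqrt (((n - m).factorial : ℝ) / ((n + m).factorial : ℝ)) :=
      Real.sqrt_pos.mpr (by positivity)
    positivity
  obtain ⟨K1, hK1⟩ : ∃ k : ℝ, k = Real.sqrt ((2 * m + 1) / (4 * Real.pi))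
      * Real.sqrt ((m - m).factorial / (m + m).factorial)
      * R ^ (m + 1) * Real.sin θ1 := ⟨_, rfl⟩
  obtain ⟨K2, hK2⟩ : ∃ k : ℝ, k = Real.sqrt ((2 * ((m+1 : ℕ) : ℝ) + 1) / (4 * Real.pi))
      * Real.sqrt (((m+1) - m).factorial / ((m+1) + m).factorial)
      * R ^ ((m+1) + 1) * Real.sin θ1 := ⟨_, rfl⟩
  obtain ⟨d1, hd1def⟩ : ∃ d : ℂ, d = (K1 : ℂ) * ((2 * Real.pi : ℝ) : ℂ) * (A : ℂ) := ⟨_, rfl⟩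
  obtain ⟨d2, hd2def⟩ : ∃ d : ℂ, d = (K2 : ℂ) * ((2 * Real.pi : ℝ) : ℂ) * (B : ℂ) := ⟨_, rfl⟩
  have hd1 : d1 ≠ 0 := by
    rw [hd1def]
    refine mul_ne_zero (mul_ne_zero ?_ ?_) ?_
    · exact Complex.ofReal_ne_zero.mpr (by rw [hK1]; exact ne_of_gt (hKpos m))
    · exact Complex.ofReal_ne_zero.mpr (by positivity)
    · exact Complex.ofReal_ne_zero.mpr hA0
  have hd2 : d2 ≠ 0 := by
    rw [hd2def]
    refine mul_ne_zero (mul_ne_zero ?_ ?_) ?_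
    · exact Complex.ofReal_ne_zero.mpr (by rw [hK2]; exact ne_of_gt (hKpos (m+1)))
    · exact Complex.ofReal_ne_zero.mpr (by positivity)
    · exact Complex.ofReal_ne_zero.mpr hB0
  have hcoef1 : ∀ s1 s2 : ℂ, ringCoef R θ1 m s1 s2 m = d1 * (s1 + s2) := by
    intro s1 s2
    rw [ringCoef_eq, ← hc, hAneg, ← hA, hd1def, hK1]
    push_cast
    ring
  have hcoef2 : ∀ s1 s2 : ℂ, ringCoef R θ1 m s1 s2 (m+1) = d2 * (s1 - s2) := by
    intro s1 s2
    rw [ringCoef_eq, ← hc, hBneg, ← hB, hd2def, hK2]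
    push_cast
    ring
  refine ⟨⟨(Mmm/d1 + Mm1m/d2)/2, (Mmm/d1 - Mm1m/d2)/2⟩, ⟨?_, ?_⟩, ?_⟩
  · rw [hcoef1]
    field_simp
    ring
  · rw [hcoef2]
    field_simp
    ring
  · rintro ⟨q1, q2⟩ ⟨h1, h2⟩
    rw [hcoef1] at h1
    rw [hcoef2] at h2
    have e1 : q1 + q2 = Mmm / d1 := by
      field_simp
      linear_combination h1
    have e2 : q1 - q2 = Mm1m / d2 := by
      field_simp
      linear_combination h2
    have hq1 : q1 = (Mmm/d1 + Mm1m/d2)/2 := by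
      rw [← e1, ← e2]; ring
    have hq2 : q2 = (Mmm/d1 - Mm1m/d2)/2 := by
      rw [← e1, ← e2]; ring
    simp [Prod.ext_iff, hq1, hq2]
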